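/- Let p, q be integers with 1 ≤ q ≤ p and let γ be the largest root of x² − px − q. Let n_l and n_{l+1} be consecutive elements of the increasing enumeration of natural numbers with at most m base-(p+1) digits satisfying condition R_{p,q}. Then the elementary m-interval [n_l‾/γ^m, n_{l+1}‾/γ^m) has length γ^(−m) if the last base-(p+1) digit of n_l is strictly less than p, and length q·γ^(−m−1) if the last digit of n_l equals p; equivalently, n_{l+1}‾ − n_l‾ = 1 in the first case and n_{l+1}‾ − n_l‾ = q/γ in the second case. -/

import Mathlib

open Finset

/-- `γ = (p + √(p² + 4q))/2`, the largest root of `x² − px − q`. -/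
noncomputable def gam (p q : ℕ) : ℝ := ((p : ℝ) + Real.sqrt ((p : ℝ) ^ 2 + 4 * q)) / 2

/-- Condition `R_{p,q}` on the base-`(p+1)` digit expansion of `n`: whenever a digit
equals `p`, the digit immediately to its right is strictly less than `q`. -/
def CondR (p q n : ℕ) : Prop :=
  ∀ j : ℕ, (Nat.digits (p + 1) n).getD (j + 1) 0 = p →
    (Nat.digits (p + 1) n).getD j 0 < q

/-- `n‾ = ∑_j d_j γ^j ∈ ℝ`, where `n = (d_{m−1} … d_1 d_0)_{p+1}`. -/
noncomputable def gbar (p q n : ℕ) : ℝ :=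
  ∑ j ∈ Finset.range (Nat.digits (p + 1) n).length,
    ((Nat.digits (p + 1) n).getD j 0 : ℝ) * gam p q ^ j

/-! The successor of an `R_{p,q}`-admissible `n` is obtained by raising its lowest raisable digit,
at position `k`, by one and clearing the digits below it, so `n'‾ - n‾ = γ^k - (n mod (p+1)^k)‾`.
Below `k` every digit is forced: it is `q - 1` if the digit above it is `p`, and `p` otherwise.
Because `γ² = pγ + q`, the quantity `w_j γ^j - (n mod (p+1)^j)‾`, where `w_j = q/γ` if the `j`-th
digit is `p` and `w_j = 1` otherwise, is the same at all these forced positions; at `j = k` it is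
`γ^k - (n mod (p+1)^k)‾` and at `j = 0` it is `w_0`. -/

namespace GammaDigits

variable {p q : ℕ}

def digit (p n j : ℕ) : ℕ := n / (p + 1) ^ j % (p + 1)

def Raisable (p q n j : ℕ) : Prop :=
  digit p n j < p ∧ (digit p n (j + 1) = p → digit p n j + 1 < q)

lemma digit_zero (n : ℕ) : digit p n 0 = n % (p + 1) := by simp [digit]

lemma digit_add (n j k : ℕ) : digit p n (j + k) = digit p (n / (p + 1) ^ k) j := by
  simp only [digit, Nat.div_div_eq_div_mul, pow_add, mul_comm]

lemma digit_succ (n j : ℕ) : digit p n (j + 1) = digit p (n / (p + 1)) j := by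
  simpa using digit_add n j 1

lemma digit_eq_zero_of_lt {n j : ℕ} (h : n < (p + 1) ^ j) : digit p n j = 0 := by
  simp [digit, Nat.div_eq_of_lt h]

lemma div_add_mul {r : ℕ} (hr : r < p + 1) (a : ℕ) : (r + (p + 1) * a) / (p + 1) = a := by
  rw [Nat.add_mul_div_left _ _ (Nat.succ_pos p), Nat.div_eq_of_lt hr, zero_add]

lemma digit_add_mul_zero {r : ℕ} (hr : r < p + 1) (a : ℕ) :
    digit p (r + (p + 1) * a) 0 = r := by
  rw [digit_zero, Nat.add_mul_mod_self_left, Nat.mod_eq_of_lt hr]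

lemma digit_add_mul_succ {r : ℕ} (hr : r < p + 1) (a j : ℕ) :
    digit p (r + (p + 1) * a) (j + 1) = digit p a j := by
  rw [digit_succ, div_add_mul hr]

lemma raisable_add_iff (n j k : ℕ) :
    Raisable p q n (j + k) ↔ Raisable p q (n / (p + 1) ^ k) j := by
  simp only [Raisable, ← digit_add, add_right_comm j k 1]

lemma raisable_succ_iff (n j : ℕ) : Raisable p q n (j + 1) ↔ Raisable p q (n / (p + 1)) j := by
  simp only [Raisable, digit_succ]

lemma condR_iff (hp : 0 < p) (n : ℕ) :
    CondR p q n ↔ ∀ j, digit p n (j + 1) = p → digit p n j < q := by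
  simp only [CondR, Nat.getD_digits _ _ (show 2 ≤ p + 1 by omega), digit]

lemma condR_add_mul_iff (hp : 0 < p) {r : ℕ} (hr : r < p + 1) (a : ℕ) :
    CondR p q (r + (p + 1) * a) ↔ CondR p q a ∧ (digit p a 0 = p → r < q) := by
  simp only [condR_iff hp]
  constructor
  · intro h
    refine ⟨fun j hj => ?_, fun h0 => ?_⟩
    · simpa only [digit_add_mul_succ hr] using h (j + 1) (by simpa only [digit_add_mul_succ hr])
    · simpa only [digit_add_mul_zero hr] using h 0 (by simpa only [digit_add_mul_succ hr])
  · rintro ⟨ha, h0⟩ (_ | j) hj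
    · simp only [digit_add_mul_zero hr, digit_add_mul_succ hr] at hj ⊢
      exact h0 hj
    · simp only [digit_add_mul_succ hr] at hj ⊢
      exact ha j hj

lemma condR_div (hp : 0 < p) {n : ℕ} (hn : CondR p q n) : CondR p q (n / (p + 1)) := by
  rw [← Nat.mod_add_div n (p + 1), condR_add_mul_iff hp (Nat.mod_lt _ (Nat.succ_pos p))] at hn
  exact hn.1

lemma condR_mul_pow (hq : 0 < q) (hpq : q ≤ p) {c : ℕ} (hc : CondR p q c) (k : ℕ) :
    CondR p q ((p + 1) ^ k * c) := by
  induction k with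
  | zero => simpa using hc
  | succ k ih =>
    rw [pow_succ', mul_assoc, ← zero_add ((p + 1) * _),
      condR_add_mul_iff (by omega) (Nat.succ_pos p)]
    exact ⟨ih, fun _ => hq⟩

lemma condR_succ (hp : 0 < p) {n : ℕ} (hn : CondR p q n) (hraise : Raisable p q n 0) :
    CondR p q (n + 1) := by
  obtain ⟨hlt, hcarry⟩ := hraise
  rw [digit_zero] at hlt hcarry
  rw [digit_succ] at hcarry
  have hsucc : n + 1 = (n % (p + 1) + 1) + (p + 1) * (n / (p + 1)) := by
    have := Nat.mod_add_div n (p + 1); omega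
  rw [hsucc, condR_add_mul_iff hp (by omega)]
  exact ⟨condR_div hp hn, hcarry⟩

lemma condR_div_pow (hp : 0 < p) {n : ℕ} (hn : CondR p q n) (k : ℕ) :
    CondR p q (n / (p + 1) ^ k) := by
  induction k with
  | zero => simpa using hn
  | succ k ih => rw [pow_succ, ← Nat.div_div_eq_div_mul]; exact condR_div hp ih

lemma exists_raisable (hp : 0 < p) (n : ℕ) : ∃ k, Raisable p q n k := by
  have hlt : n < (p + 1) ^ n := Nat.lt_pow_self (by omega)
  have hlt' : n < (p + 1) ^ (n + 1) := hlt.trans (Nat.pow_lt_pow_right (by omega) (by omega))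
  refine ⟨n, ?_, fun h => ?_⟩
  · rw [digit_eq_zero_of_lt hlt]; exact hp
  · rw [digit_eq_zero_of_lt hlt'] at h; omega

open Classical in
lemma exists_first_raisable (hp : 0 < p) (n : ℕ) :
    ∃ k, Raisable p q n k ∧ ∀ j < k, ¬Raisable p q n j :=
  ⟨Nat.find (exists_raisable hp n), Nat.find_spec _, fun _ => Nat.find_min _⟩

lemma le_of_div_le_of_not_raisable (hp : 0 < p) {x n : ℕ} (hx : CondR p q x)
    (hn : ¬Raisable p q n 0) (hdiv : x / (p + 1) ≤ n / (p + 1)) : x ≤ n := by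
  rw [condR_iff hp] at hx
  have hx0 := hx 0
  simp only [Raisable, zero_add, digit_succ, digit_zero] at hn hx0
  have hxmod := Nat.mod_lt x (show 0 < p + 1 by omega)
  have hnmod := Nat.mod_lt n (show 0 < p + 1 by omega)
  have hxdiv := Nat.mod_add_div x (p + 1)
  have hndiv := Nat.mod_add_div n (p + 1)
  rcases hdiv.lt_or_eq with hlt | heq
  · have := Nat.mul_le_mul_left (p + 1) (Nat.succ_le_of_lt hlt)
    rw [Nat.mul_succ] at this
    omega
  · -- the digit of `n` is `p`, or `q - 1` below a `p`; either way it bounds the digit of `x`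
    rw [heq] at hx0 hxdiv
    omega

lemma le_of_div_pow_le (hp : 0 < p) {k x n : ℕ} (hx : CondR p q x)
    (hlow : ∀ j < k, ¬Raisable p q n j) (hdiv : x / (p + 1) ^ k ≤ n / (p + 1) ^ k) : x ≤ n := by
  induction k generalizing x n with
  | zero => simpa using hdiv
  | succ k ih =>
    refine le_of_div_le_of_not_raisable hp hx (hlow 0 k.succ_pos) (ih (condR_div hp hx) ?_ ?_)
    · intro j hj
      rw [← raisable_succ_iff]
      exact hlow (j + 1) (by omega)
    · simpa only [Nat.div_div_eq_div_mul, ← pow_succ'] using hdiv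

theorem isLeast_condR_gt (hq : 0 < q) (hpq : q ≤ p) {n k : ℕ} (hn : CondR p q n)
    (hk : Raisable p q n k) (hlow : ∀ j < k, ¬Raisable p q n j) :
    IsLeast {x | CondR p q x ∧ n < x} ((p + 1) ^ k * (n / (p + 1) ^ k + 1)) := by
  have hp : 0 < p := hq.trans_le hpq
  have hbk : 0 < (p + 1) ^ k := by positivity
  refine ⟨⟨?_, ?_⟩, fun x ⟨hx, hnx⟩ => ?_⟩
  · rw [← zero_add k, raisable_add_iff] at hk
    exact condR_mul_pow hq hpq (condR_succ hp (condR_div_pow hp hn k) hk) k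
  · have := Nat.lt_div_mul_add (a := n) hbk
    linarith
  · by_contra! hxs
    have hdiv : x / (p + 1) ^ k < n / (p + 1) ^ k + 1 := by
      rw [Nat.div_lt_iff_lt_mul hbk, mul_comm]; exact hxs
    exact hnx.not_ge (le_of_div_pow_le hp hx hlow (Nat.le_of_lt_succ hdiv))

lemma gam_pos (hp : 0 < p) : 0 < gam p q := by
  unfold gam
  have : (0 : ℝ) < p := by exact_mod_cast hp
  positivity

variable (p q) in
lemma gam_sq : gam p q ^ 2 = p * gam p q + q := by
  have hsqrt : Real.sqrt ((p : ℝ) ^ 2 + 4 * q) ^ 2 = (p : ℝ) ^ 2 + 4 * q :=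
    Real.sq_sqrt (by positivity)
  unfold gam
  linear_combination hsqrt / 4

lemma div_gam (hp : 0 < p) : (q : ℝ) / gam p q = gam p q - p := by
  rw [div_eq_iff (gam_pos hp).ne']
  linear_combination (-1 : ℝ) * gam_sq p q

lemma gbar_zero : gbar p q 0 = 0 := by simp [gbar]

lemma gbar_add_mul (hp : 0 < p) {r : ℕ} (hr : r < p + 1) (a : ℕ) :
    gbar p q (r + (p + 1) * a) = r + gam p q * gbar p q a := by
  by_cases h : r = 0 ∧ a = 0
  · obtain ⟨rfl, rfl⟩ := h
    simp [gbar_zero]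
  rw [gbar, Nat.digits_add (p + 1) (by omega) r a hr (by tauto), List.length_cons,
    Finset.sum_range_succ', gbar, Finset.mul_sum, add_comm]
  simp only [List.getD_cons_succ, List.getD_cons_zero, pow_zero, mul_one, pow_succ]
  congr 1
  exact Finset.sum_congr rfl fun j _ => by ring

lemma gbar_of_lt (hp : 0 < p) {r : ℕ} (hr : r < p + 1) : gbar p q r = r := by
  simpa [gbar_zero] using gbar_add_mul (q := q) hp hr 0

lemma gbar_add_pow_mul (hp : 0 < p) {k r : ℕ} (hr : r < (p + 1) ^ k) (a : ℕ) :
    gbar p q (r + (p + 1) ^ k * a) = gbar p q r + gam p q ^ k * gbar p q a := by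
  induction k generalizing r with
  | zero => simp_all [gbar_zero]
  | succ k ih =>
    have hmod : r % (p + 1) < p + 1 := Nat.mod_lt r (by omega)
    have hdiv : r / (p + 1) < (p + 1) ^ k := by
      rw [Nat.div_lt_iff_lt_mul (by omega), ← pow_succ]; exact hr
    have hr' : r + (p + 1) ^ (k + 1) * a =
        r % (p + 1) + (p + 1) * (r / (p + 1) + (p + 1) ^ k * a) := by
      have := Nat.mod_add_div r (p + 1)
      rw [pow_succ']
      linarith
    conv_rhs => rw [← Nat.mod_add_div r (p + 1)]
    rw [hr', gbar_add_mul hp hmod, gbar_add_mul hp hmod, ih hdiv]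
    ring

lemma gbar_succ (hp : 0 < p) {n : ℕ} (h : n % (p + 1) < p) :
    gbar p q (n + 1) = gbar p q n + 1 := by
  have hsucc : n + 1 = (n % (p + 1) + 1) + (p + 1) * (n / (p + 1)) := by
    have := Nat.mod_add_div n (p + 1); omega
  conv_rhs => rw [← Nat.mod_add_div n (p + 1)]
  rw [hsucc, gbar_add_mul hp (by omega), gbar_add_mul hp (Nat.mod_lt n (by omega))]
  push_cast
  ring

lemma gbar_mod_pow_succ (hp : 0 < p) (n j : ℕ) :
    gbar p q (n % (p + 1) ^ (j + 1)) =
      gbar p q (n % (p + 1) ^ j) + digit p n j * gam p q ^ j := by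
  rw [Nat.mod_pow_succ, gbar_add_pow_mul hp (Nat.mod_lt _ (by positivity)),
    gbar_of_lt hp (Nat.mod_lt _ (by omega)), digit, mul_comm]

lemma digit_eq_of_not_raisable (hq : 0 < q) (hpq : q ≤ p) {n j : ℕ} (hn : CondR p q n)
    (h : ¬Raisable p q n j) : digit p n j = if digit p n (j + 1) = p then q - 1 else p := by
  have hvalid := (condR_iff (hq.trans_le hpq) n).1 hn j
  have hlt : digit p n j < p + 1 := Nat.mod_lt _ (by omega)
  unfold Raisable at h
  split_ifs <;> omega

noncomputable def gap (p q n j : ℕ) : ℝ :=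
  (if digit p n j = p then (q : ℝ) / gam p q else 1) * gam p q ^ j - gbar p q (n % (p + 1) ^ j)

lemma gap_succ (hq : 0 < q) (hpq : q ≤ p) {n j : ℕ} (hn : CondR p q n)
    (h : ¬Raisable p q n j) : gap p q n (j + 1) = gap p q n j := by
  have hp : 0 < p := hq.trans_le hpq
  have hdigit := digit_eq_of_not_raisable hq hpq hn h
  unfold gap
  rw [gbar_mod_pow_succ hp, hdigit, div_gam hp]
  by_cases htop : digit p n (j + 1) = p
  · have hne : q - 1 ≠ p := by omega
    simp only [htop, if_true, hne, if_false, Nat.cast_sub hq, Nat.cast_one]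
    linear_combination gam p q ^ j * gam_sq p q
  · simp only [htop, if_true, if_false]
    ring

lemma gap_eq_gap_zero (hq : 0 < q) (hpq : q ≤ p) {n k : ℕ} (hn : CondR p q n)
    (hlow : ∀ j < k, ¬Raisable p q n j) : gap p q n k = gap p q n 0 := by
  induction k with
  | zero => rfl
  | succ k ih =>
    rw [gap_succ hq hpq hn (hlow k k.lt_succ_self), ih fun j hj => hlow j (hj.trans k.lt_succ_self)]

theorem gbar_next_sub (hq : 0 < q) (hpq : q ≤ p) {n k : ℕ} (hn : CondR p q n)
    (hk : Raisable p q n k) (hlow : ∀ j < k, ¬Raisable p q n j) :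
    gbar p q ((p + 1) ^ k * (n / (p + 1) ^ k + 1)) - gbar p q n =
      if n % (p + 1) = p then (q : ℝ) / gam p q else 1 := by
  have hp : 0 < p := hq.trans_le hpq
  have hbk : n % (p + 1) ^ k < (p + 1) ^ k := Nat.mod_lt _ (by positivity)
  have hsplit : gbar p q n =
      gbar p q (n % (p + 1) ^ k) + gam p q ^ k * gbar p q (n / (p + 1) ^ k) := by
    conv_lhs => rw [← Nat.mod_add_div n ((p + 1) ^ k)]
    exact gbar_add_pow_mul hp hbk _
  have hlast : n / (p + 1) ^ k % (p + 1) < p := by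
    simpa only [← digit_zero, ← digit_add, zero_add] using hk.1
  have hnext : gbar p q ((p + 1) ^ k * (n / (p + 1) ^ k + 1)) =
      gam p q ^ k * (gbar p q (n / (p + 1) ^ k) + 1) := by
    rw [← zero_add ((p + 1) ^ k * _), gbar_add_pow_mul hp (by positivity), gbar_zero,
      gbar_succ hp hlast, zero_add]
  have hgap := gap_eq_gap_zero hq hpq hn hlow
  simp only [gap, if_neg hk.1.ne, pow_zero, Nat.mod_one, gbar_zero, digit_zero] at hgap
  rw [hnext, hsplit]
  linear_combination hgap

end GammaDigits

open GammaDigits in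
/-- Let `1 ≤ q ≤ p` and let `n, n'` be consecutive elements of the
increasing enumeration of natural numbers with at most `m` base-`(p+1)` digits
satisfying condition `R_{p,q}`. Then the elementary `m`-interval `[n‾/γ^m, n'‾/γ^m)` has
length `γ^(−m)` (i.e. `n'‾ − n‾ = 1`) if the last base-`(p+1)` digit of `n` is `< p`,
and length `q·γ^(−m−1)` (i.e. `n'‾ − n‾ = q/γ`) if the last digit of `n` equals `p`. -/
theorem statement17 (p q : ℕ) (hq : 1 ≤ q) (hpq : q ≤ p) (m n n' : ℕ)
    (hn : CondR p q n ∧ n < (p + 1) ^ m)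
    (hn' : CondR p q n' ∧ n' < (p + 1) ^ m)
    (hlt : n < n')
    (hcons : ∀ x : ℕ, n < x → x < n' → ¬(CondR p q x ∧ x < (p + 1) ^ m)) :
    (n % (p + 1) < p →
      gbar p q n' - gbar p q n = 1 ∧
      gbar p q n' / gam p q ^ m - gbar p q n / gam p q ^ m = gam p q ^ (-(m : ℤ))) ∧
    (n % (p + 1) = p →
      gbar p q n' - gbar p q n = (q : ℝ) / gam p q ∧
      gbar p q n' / gam p q ^ m - gbar p q n / gam p q ^ m =
        (q : ℝ) * gam p q ^ (-(m : ℤ) - 1)) := by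
  have hp : 0 < p := by omega
  obtain ⟨k, hk, hlow⟩ := exists_first_raisable (q := q) hp n
  obtain ⟨⟨hnext, hnnext⟩, hleast⟩ := isLeast_condR_gt hq hpq hn.1 hk hlow
  have heq : n' = (p + 1) ^ k * (n / (p + 1) ^ k + 1) :=
    le_antisymm (not_lt.1 fun hlt' => hcons _ hnnext hlt' ⟨hnext, hlt'.trans hn'.2⟩)
      (hleast ⟨hn'.1, hlt⟩)
  have hdiff := gbar_next_sub hq hpq hn.1 hk hlow
  rw [← heq] at hdiff
  have hγ : gam p q ≠ 0 := (gam_pos hp).ne'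
  refine ⟨fun hlast => ?_, fun hlast => ?_⟩
  · rw [if_neg hlast.ne] at hdiff
    refine ⟨hdiff, ?_⟩
    rw [← sub_div, hdiff, zpow_neg, zpow_natCast, one_div]
  · rw [if_pos hlast] at hdiff
    refine ⟨hdiff, ?_⟩
    rw [← sub_div, hdiff, zpow_sub_one₀ hγ, zpow_neg, zpow_natCast]
    field_simp
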